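/- arXiv:1407.5819 — 11 statements merged into one kernel-verified Lean document; each statement's English description precedes it below -/
import Mathlib

section
/- Sequential composition of multirelations is weakly associative: for all multirelations R, S, T over X, (R · S) · T ⊆ R · (S · T). -/
open Set

/-- Sequential composition of multirelations (Peleg). -/
def mseq {X : Type*} (R S : Set (X × Set X)) : Set (X × Set X) :=
  {p | ∃ B, (p.1, B) ∈ R ∧ ∃ f : X → Set X, (∀ b ∈ B, (b, f b) ∈ S) ∧ p.2 = ⋃ b ∈ B, f b}

/-- The unit of sequential composition. -/
def sunit (X : Type*) : Set (X × Set X) := {p | p.2 = {p.1}}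

/-- Parallel (concurrent) composition of multirelations. -/
def mpar {X : Type*} (R S : Set (X × Set X)) : Set (X × Set X) :=
  {p | ∃ A B, (p.1, A) ∈ R ∧ (p.1, B) ∈ S ∧ p.2 = A ∪ B}

/-- The unit of parallel composition. -/
def punit (X : Type*) : Set (X × Set X) := {p | p.2 = (∅ : Set X)}

/-- Domain of a multirelation. -/
def mdom {X : Type*} (R : Set (X × Set X)) : Set (X × Set X) :=
  {p | p.2 = {p.1} ∧ ∃ A, (p.1, A) ∈ R}

/-- Antidomain of a multirelation. -/
def mantidom {X : Type*} (R : Set (X × Set X)) : Set (X × Set X) :=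
  {p | p.2 = {p.1} ∧ ¬ ∃ A, (p.1, A) ∈ R}

/-- Diamond operator. -/
def mdia {X : Type*} (R P : Set (X × Set X)) : Set (X × Set X) := mdom (mseq R P)

theorem mk_mem_mseq {X : Type*} {R S : Set (X × Set X)} {a : X} {B : Set X}
    (hB : (a, B) ∈ R) (f : X → Set X) (hf : ∀ b ∈ B, (b, f b) ∈ S) :
    (a, ⋃ b ∈ B, f b) ∈ mseq R S :=
  ⟨B, hB, f, hf, rfl⟩

theorem stmt1 {X : Type*} (R S T : Set (X × Set X)) :
    mseq (mseq R S) T ⊆ mseq R (mseq S T) := by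
  rintro ⟨a, _⟩ ⟨_, ⟨C, hC, g, hg, rfl⟩, f, hf, rfl⟩
  have hgf : ∀ c ∈ C, (c, ⋃ b ∈ g c, f b) ∈ mseq S T := fun c hc =>
    mk_mem_mseq (hg c hc) f fun b hb => hf b (mem_biUnion hc hb)
  simpa only [biUnion_iUnion] using mk_mem_mseq hC _ hgf
end

section
/- There exist a set X and multirelations R, S over X such that R · (S ∪ T) is not contained in R · S ∪ R · T for suitable T; concretely, with X = {a,b}, R = {(a,{a,b})}, S = {(a,{a})}, T = {(b,{b})}, one has R · (S ∪ T) = R while R · S ∪ R · T = ∅. -/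
open Set

/-! A pair `(x, A)` of `R · S` must continue every point of an `R`-successor set of `x` through `S`.
The union `{(a,{a}), (b,{b})}` is the identity on `{a, b}`, so composing with it returns `R`;
each of its two halves is undefined at one point of `{a, b}`, so neither composite has a pair. -/

section Mseq

variable {X : Type*}

theorem mseq_eq_self_of_subset_sunit {R S : Set (X × Set X)} (hS : S ⊆ sunit X)
    (hR : ∀ p ∈ R, ∀ b ∈ p.2, (b, ({b} : Set X)) ∈ S) : mseq R S = R := by
  ext ⟨x, A⟩
  constructor
  · rintro ⟨B, hxB, f, hf, rfl⟩
    have hf_singleton : ∀ b ∈ B, f b = {b} := fun b hb => hS (hf b hb)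
    rwa [iUnion₂_congr hf_singleton, biUnion_of_singleton]
  · intro hxA
    exact ⟨A, hxA, fun b => {b}, hR _ hxA, (biUnion_of_singleton A).symm⟩

theorem mseq_eq_empty_of_forall_exists_notMem {R S : Set (X × Set X)}
    (hR : ∀ p ∈ R, ∃ b ∈ p.2, ∀ C, (b, C) ∉ S) : mseq R S = ∅ := by
  refine eq_empty_of_forall_notMem fun p ⟨B, hpB, f, hf, _⟩ => ?_
  obtain ⟨b, hb, hbS⟩ := hR _ hpB
  exact hbS _ (hf b hb)

end Mseq

theorem stmt3 {X : Type*} (a b : X) (hab : a ≠ b) :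
    mseq ({(a, ({a, b} : Set X))} : Set (X × Set X))
         (({(a, ({a} : Set X))} : Set (X × Set X)) ∪ {(b, ({b} : Set X))})
      = ({(a, ({a, b} : Set X))} : Set (X × Set X)) ∧
    mseq ({(a, ({a, b} : Set X))} : Set (X × Set X)) {(a, ({a} : Set X))} ∪
    mseq ({(a, ({a, b} : Set X))} : Set (X × Set X)) {(b, ({b} : Set X))} = ∅ := by
  refine ⟨mseq_eq_self_of_subset_sunit ?_ ?_, ?_⟩
  · rintro _ (rfl | rfl) <;> rfl
  · rintro _ rfl _ (rfl | rfl)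
    exacts [Or.inl rfl, Or.inr rfl]
  · rw [mseq_eq_empty_of_forall_exists_notMem, mseq_eq_empty_of_forall_exists_notMem, union_empty]
    · rintro _ rfl
      exact ⟨a, Or.inl rfl, fun C h => hab (Prod.ext_iff.mp h).1⟩
    · rintro _ rfl
      exact ⟨b, Or.inr rfl, fun C h => hab (Prod.ext_iff.mp h).1.symm⟩
end

section
/- Sequential composition distributes over parallel composition on the right only sub-distributively: for all multirelations R, S, T over X, (R‖S) · T ⊆ (R·T)‖(S·T), and there exist multirelations witnessing that the reverse inclusion fails. -/
open Set

/-!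
In `(R ‖ S) · T` a single choice function `f` resolves `T` at every intermediate state, so the
two branches share it and splitting the union over `A ∪ B` gives the inclusion. In
`(R · T) ‖ (S · T)` the two branches may resolve `T` differently at the same state: with
`R = S = sunit` and `T` the nondeterministic jump to an arbitrary single state, the right-hand
side reduces to `T ‖ T`, which reaches two-element sets, while the left-hand side is `T` itself.
-/

section

variable {X : Type*}

theorem mseq_mpar_subset (R S T : Set (X × Set X)) :
    mseq (mpar R S) T ⊆ mpar (mseq R T) (mseq S T) := by
  rintro ⟨a, C⟩ ⟨_, ⟨A, B, hA, hB, rfl⟩, f, hf, rfl⟩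
  exact ⟨⋃ b ∈ A, f b, ⋃ b ∈ B, f b, ⟨A, hA, f, fun b hb => hf b (Or.inl hb), rfl⟩,
    ⟨B, hB, f, fun b hb => hf b (Or.inr hb), rfl⟩, biUnion_union A B f⟩

theorem sunit_mseq (R : Set (X × Set X)) : mseq (sunit X) R = R := by
  ext ⟨a, A⟩
  constructor
  · rintro ⟨B, hB, f, hf, rfl⟩
    obtain rfl : B = {a} := hB
    simpa using hf a rfl
  · intro h
    exact ⟨{a}, rfl, fun _ => A, by simpa using h, by simp⟩

theorem mpar_sunit_self : mpar (sunit X) (sunit X) = sunit X := by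
  ext ⟨a, A⟩
  simp [mpar, sunit]

/-- The multirelation of the assignment `x := ?`: every state may move to any single state. -/
def havoc (X : Type*) : Set (X × Set X) := {p | ∃ b, p.2 = {b}}

theorem not_mpar_havoc_subset [Nontrivial X] : ¬ mpar (havoc X) (havoc X) ⊆ havoc X := by
  obtain ⟨a, b, hab⟩ := exists_pair_ne X
  intro h
  obtain ⟨c, hc⟩ := h (show (a, {a, b}) ∈ mpar (havoc X) (havoc X) from
    ⟨{a}, {b}, ⟨a, rfl⟩, ⟨b, rfl⟩, rfl⟩)
  have hac : a = c := hc.subset (mem_insert a {b})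
  have hbc : b = c := hc.subset (mem_insert_of_mem a rfl)
  exact hab (hac.trans hbc.symm)

end

theorem stmt6 :
    (∀ (X : Type) (R S T : Set (X × Set X)),
        mseq (mpar R S) T ⊆ mpar (mseq R T) (mseq S T)) ∧
    (∃ (X : Type) (R S T : Set (X × Set X)),
        ¬ mpar (mseq R T) (mseq S T) ⊆ mseq (mpar R S) T) := by
  refine ⟨fun X R S T => mseq_mpar_subset R S T, Bool, sunit Bool, sunit Bool, havoc Bool, ?_⟩
  rw [sunit_mseq, mpar_sunit_self, sunit_mseq]
  exact not_mpar_havoc_subset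
end

section
/- If any one of the multirelations R, S, T over X is a subidentity (a subset of 1_σ), then sequential composition is associative on them: (R · S) · T = R · (S · T). -/
open Set

/-! Composing with a subidentity only filters: on the left it restricts the initial state, on the
right it restricts every final state. Each case of the theorem thus reduces to moving such a filter
across the composition. -/

section

variable {X : Type*} {R S T : Set (X × Set X)}

lemma mseq_of_subset_sunit_left (hR : R ⊆ sunit X) :
    mseq R S = {p | (p.1, {p.1}) ∈ R ∧ p ∈ S} := by
  ext ⟨a, A⟩
  constructor
  · rintro ⟨B, hB, f, hf, rfl⟩
    obtain rfl : B = {a} := hR hB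
    simpa using And.intro hB (hf a rfl)
  · rintro ⟨ha, hA⟩
    exact ⟨{a}, ha, fun _ => A, by simpa using hA, by simp⟩

lemma mseq_of_subset_sunit_right (hS : S ⊆ sunit X) :
    mseq R S = {p | p ∈ R ∧ ∀ b ∈ p.2, (b, {b}) ∈ S} := by
  ext ⟨a, A⟩
  constructor
  · rintro ⟨B, hB, f, hf, rfl⟩
    have hf_singleton : ∀ b ∈ B, f b = {b} := fun b hb => hS (hf b hb)
    rw [iUnion₂_congr hf_singleton, biUnion_of_singleton]
    exact ⟨hB, fun b hb => hf_singleton b hb ▸ hf b hb⟩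
  · rintro ⟨hA, hS'⟩
    exact ⟨A, hA, fun b => {b}, hS', (biUnion_of_singleton A).symm⟩

lemma mseq_sep_fst_left (P : X → Prop) :
    mseq {p | P p.1 ∧ p ∈ R} S = {p | P p.1 ∧ p ∈ mseq R S} := by
  ext ⟨a, A⟩
  constructor
  · rintro ⟨B, ⟨ha, hB⟩, hS⟩
    exact ⟨ha, B, hB, hS⟩
  · rintro ⟨ha, B, hB, hS⟩
    exact ⟨B, ⟨ha, hB⟩, hS⟩

lemma mseq_sep_forall_snd_right (Q : X → Prop) :
    mseq R {p | p ∈ S ∧ ∀ b ∈ p.2, Q b} = {p | p ∈ mseq R S ∧ ∀ b ∈ p.2, Q b} := by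
  ext ⟨a, A⟩
  constructor
  · rintro ⟨B, hB, f, hf, rfl⟩
    refine ⟨⟨B, hB, f, fun b hb => (hf b hb).1, rfl⟩, fun c hc => ?_⟩
    obtain ⟨b, hb, hcb⟩ := mem_iUnion₂.mp hc
    exact (hf b hb).2 c hcb
  · rintro ⟨⟨B, hB, f, hf, rfl⟩, hQ⟩
    exact ⟨B, hB, f, fun b hb => ⟨hf b hb, fun c hc => hQ c (mem_biUnion hb hc)⟩, rfl⟩

lemma mseq_sep_forall_snd_left (P : X → Prop) :
    mseq {p | p ∈ R ∧ ∀ b ∈ p.2, P b} S = mseq R {p | P p.1 ∧ p ∈ S} := by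
  ext ⟨a, A⟩
  constructor
  · rintro ⟨B, ⟨hB, hP⟩, f, hf, hA⟩
    exact ⟨B, hB, f, fun b hb => ⟨hP b hb, hf b hb⟩, hA⟩
  · rintro ⟨B, hB, f, hf, hA⟩
    exact ⟨B, ⟨hB, fun b hb => (hf b hb).1⟩, f, fun b hb => (hf b hb).2, hA⟩

end

theorem stmt8 {X : Type*} (R S T : Set (X × Set X))
    (h : R ⊆ sunit X ∨ S ⊆ sunit X ∨ T ⊆ sunit X) :
    mseq (mseq R S) T = mseq R (mseq S T) := by
  rcases h with hR | hS | hT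
  · rw [mseq_of_subset_sunit_left hR, mseq_of_subset_sunit_left hR]
    exact mseq_sep_fst_left fun a => (a, {a}) ∈ R
  · rw [mseq_of_subset_sunit_right hS, mseq_of_subset_sunit_left hS]
    exact mseq_sep_forall_snd_left fun b => (b, {b}) ∈ S
  · rw [mseq_of_subset_sunit_right hT, mseq_of_subset_sunit_right hT]
    exact (mseq_sep_forall_snd_right fun c => (c, {c}) ∈ T).symm
end

section
/- If T is a subidentity (T ⊆ 1_σ), then sequential composition fully distributes over parallel composition on the right: (R‖S) · T = (R·T)‖(S·T) for all multirelations R, S. -/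
open Set

/-! Composing with a subidentity `T` only filters: `R · T` consists of the pairs `(a, A) ∈ R`
such that `(b, {b}) ∈ T` for every `b ∈ A`, and this condition holds for `A ∪ B` exactly when it
holds for `A` and for `B`. -/

theorem mem_mseq_iff_of_subset_sunit {X : Type*} {R T : Set (X × Set X)} (hT : T ⊆ sunit X)
    {p : X × Set X} : p ∈ mseq R T ↔ p ∈ R ∧ ∀ b ∈ p.2, (b, {b}) ∈ T := by
  constructor
  · rintro ⟨B, hB, f, hf, hp⟩
    have hf_singleton : ∀ b ∈ B, f b = {b} := fun b hb => hT (hf b hb)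
    have hpB : p.2 = B := by rw [hp, iUnion₂_congr hf_singleton, biUnion_of_singleton]
    refine ⟨by rwa [← hpB] at hB, fun b hb => ?_⟩
    rw [hpB] at hb
    simpa [hf_singleton b hb] using hf b hb
  · rintro ⟨hp, hpT⟩
    exact ⟨p.2, hp, singleton, hpT, (biUnion_of_singleton p.2).symm⟩

theorem stmt9 {X : Type*} (R S T : Set (X × Set X)) (hT : T ⊆ sunit X) :
    mseq (mpar R S) T = mpar (mseq R T) (mseq S T) := by
  ext ⟨a, C⟩
  simp only [mem_mseq_iff_of_subset_sunit hT, mpar, mem_ofPred_eq]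
  constructor
  · rintro ⟨⟨A, B, hA, hB, rfl⟩, hAB⟩
    exact ⟨A, B, ⟨hA, fun b hb => hAB b (Or.inl hb)⟩, ⟨hB, fun b hb => hAB b (Or.inr hb)⟩, rfl⟩
  · rintro ⟨A, B, ⟨hA, hAT⟩, ⟨hB, hBT⟩, rfl⟩
    exact ⟨⟨A, B, hA, hB, rfl⟩, fun b hb => hb.elim (hAT b) (hBT b)⟩
end

section
/- If P is a subidentity (P ⊆ 1_σ), then sequential composition distributes over union on the left: P · (S ∪ T) = P · S ∪ P · T for all multirelations S, T. -/
open Set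

theorem mseq_eq_of_subset_sunit {X : Type*} {P : Set (X × Set X)} (hP : P ⊆ sunit X)
    (S : Set (X × Set X)) : mseq P S = {p | (p.1, {p.1}) ∈ P ∧ p ∈ S} := by
  ext ⟨a, A⟩
  constructor
  · rintro ⟨B, hB, f, hf, rfl⟩
    obtain rfl : B = {a} := hP hB
    simpa only [biUnion_singleton] using ⟨hB, hf a rfl⟩
  · rintro ⟨ha, hA⟩
    exact ⟨{a}, ha, fun _ => A, fun b hb => hb ▸ hA, (biUnion_singleton a fun _ => A).symm⟩

theorem stmt10 {X : Type*} (P S T : Set (X × Set X)) (hP : P ⊆ sunit X) :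
    mseq P (S ∪ T) = mseq P S ∪ mseq P T := by
  simp only [mseq_eq_of_subset_sunit hP]
  ext p
  exact and_or_left
end

section
/- For any multirelation R, the domain multirelation satisfies d(R) · R = R. -/
open Set

theorem exists_iUnion_singleton_iff_mem {X : Type*} {S : Set (X × Set X)} {a : X} {A : Set X} :
    (∃ f : X → Set X, (∀ b ∈ ({a} : Set X), (b, f b) ∈ S) ∧ A = ⋃ b ∈ ({a} : Set X), f b) ↔
      (a, A) ∈ S := by
  simp only [mem_singleton_iff, forall_eq, iUnion_iUnion_eq_left]
  exact ⟨fun ⟨f, hf, hA⟩ => hA ▸ hf, fun h => ⟨fun _ => A, h, rfl⟩⟩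

theorem mseq_mdom {X : Type*} (R S : Set (X × Set X)) :
    mseq (mdom R) S = {p ∈ S | ∃ A, (p.1, A) ∈ R} := by
  ext ⟨a, A⟩
  simp only [mseq, mdom, mem_ofPred_eq]
  constructor
  · rintro ⟨_, ⟨rfl, hR⟩, hS⟩
    exact ⟨exists_iUnion_singleton_iff_mem.mp hS, hR⟩
  · rintro ⟨hS, hR⟩
    exact ⟨{a}, ⟨rfl, hR⟩, exists_iUnion_singleton_iff_mem.mpr hS⟩

theorem stmt11 {X : Type*} (R : Set (X × Set X)) :
    mseq (mdom R) R = R := by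
  rw [mseq_mdom, sep_eq_self_iff_mem_true]
  exact fun p hp => ⟨p.2, hp⟩
end

section
/- Domain of multirelations satisfies locality: for all multirelations R, S over X, d(R · S) = d(R · d(S)). -/
open Set

theorem mdom_congr {X : Type*} {R S : Set (X × Set X)}
    (h : ∀ a, (∃ A, (a, A) ∈ R) ↔ ∃ A, (a, A) ∈ S) : mdom R = mdom S := by
  ext p
  exact and_congr_right fun _ => h p.1

theorem exists_mem_mdom_iff {X : Type*} {R : Set (X × Set X)} {a : X} :
    (∃ A, (a, A) ∈ mdom R) ↔ ∃ A, (a, A) ∈ R :=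
  ⟨fun ⟨_, _, h⟩ => h, fun h => ⟨{a}, rfl, h⟩⟩

theorem exists_mem_mseq_iff {X : Type*} {R S : Set (X × Set X)} {a : X} :
    (∃ A, (a, A) ∈ mseq R S) ↔ ∃ B, (a, B) ∈ R ∧ ∀ b ∈ B, ∃ A, (b, A) ∈ S := by
  constructor
  · rintro ⟨A, B, hB, f, hf, -⟩
    exact ⟨B, hB, fun b hb => ⟨f b, hf b hb⟩⟩
  · rintro ⟨B, hB, hS⟩
    choose! f hf using hS
    exact ⟨_, B, hB, f, hf, rfl⟩

theorem stmt12 {X : Type*} (R S : Set (X × Set X)) :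
    mdom (mseq R S) = mdom (mseq R (mdom S)) :=
  mdom_congr fun _ => by simp only [exists_mem_mseq_iff, exists_mem_mdom_iff]
end

section
/- The domain of a parallel composition of multirelations is the intersection of the domains: d(R‖S) = d(R) ∩ d(S); moreover for domain elements, parallel composition equals sequential composition: d(R)‖d(S) = d(R) · d(S). -/
open Set

/-! A point `a` lies in the domain of `R ‖ S` iff it has an outcome in both `R` and `S`, and a
domain element `(a, {a})` is idempotent under `∪`; so both sides of the second identity are
`d(R) ∩ d(S)`. On the sequential side, `d(R) · T` only lets `a` continue to `{a}` and then
through `T`, i.e. it restricts `T` to the points of `d(R)`. -/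

namespace Multirelation

variable {X : Type*}

theorem mem_mdom_iff {R : Set (X × Set X)} {a : X} {A : Set X} :
    (a, A) ∈ mdom R ↔ A = {a} ∧ ∃ B, (a, B) ∈ R :=
  Iff.rfl

theorem mdom_mpar (R S : Set (X × Set X)) : mdom (mpar R S) = mdom R ∩ mdom S := by
  ext ⟨a, A⟩
  simp only [mem_inter_iff, mem_mdom_iff, mpar, mem_ofPred_eq]
  constructor
  · rintro ⟨hA, -, B, C, hB, hC, -⟩
    exact ⟨⟨hA, B, hB⟩, hA, C, hC⟩
  · rintro ⟨⟨hA, B, hB⟩, -, C, hC⟩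
    exact ⟨hA, B ∪ C, B, C, hB, hC, rfl⟩

theorem mpar_mdom_mdom (R S : Set (X × Set X)) :
    mpar (mdom R) (mdom S) = mdom R ∩ mdom S := by
  ext ⟨a, A⟩
  simp only [mem_inter_iff, mem_mdom_iff, mpar, mem_ofPred_eq]
  constructor
  · rintro ⟨_, _, ⟨rfl, hR⟩, ⟨rfl, hS⟩, rfl⟩
    exact ⟨⟨union_self _, hR⟩, union_self _, hS⟩
  · rintro ⟨⟨rfl, hR⟩, -, hS⟩
    exact ⟨{a}, {a}, ⟨rfl, hR⟩, ⟨rfl, hS⟩, (union_self _).symm⟩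

theorem mseq_mdom_left (R T : Set (X × Set X)) :
    mseq (mdom R) T = {p | p ∈ T ∧ ∃ A, (p.1, A) ∈ R} := by
  ext ⟨a, A⟩
  simp only [mseq, mem_mdom_iff, mem_ofPred_eq]
  constructor
  · rintro ⟨_, ⟨rfl, hR⟩, f, hf, rfl⟩
    rw [biUnion_singleton]
    exact ⟨hf a rfl, hR⟩
  · rintro ⟨hT, hR⟩
    refine ⟨{a}, ⟨rfl, hR⟩, fun _ => A, ?_, (biUnion_singleton a fun _ => A).symm⟩
    rintro b rfl
    exact hT

theorem mseq_mdom_mdom (R S : Set (X × Set X)) :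
    mseq (mdom R) (mdom S) = mdom R ∩ mdom S := by
  ext ⟨a, A⟩
  rw [mseq_mdom_left]
  simp only [mem_ofPred_eq, mem_inter_iff, mem_mdom_iff]
  tauto

end Multirelation

open Multirelation in
theorem stmt13 {X : Type*} (R S : Set (X × Set X)) :
    mdom (mpar R S) = mdom R ∩ mdom S ∧
    mpar (mdom R) (mdom S) = mseq (mdom R) (mdom S) :=
  ⟨mdom_mpar R S, (mpar_mdom_mdom R S).trans (mseq_mdom_mdom R S).symm⟩
end

section
/- For multirelations, the antidomain turns union into product and parallel composition into union: a(R ∪ S) = a(R) · a(S) and a(R‖S) = a(R) ∪ a(S). -/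
open Set

theorem mantidom_subset_sunit {X : Type*} (R : Set (X × Set X)) : mantidom R ⊆ sunit X :=
  fun _ hp => hp.1

theorem mantidom_union {X : Type*} (R S : Set (X × Set X)) :
    mantidom (R ∪ S) = mantidom R ∩ mantidom S := by
  ext ⟨a, A⟩
  simp only [mantidom, mem_ofPred_eq, mem_union, mem_inter_iff, exists_or, not_or]
  tauto

theorem mantidom_mpar {X : Type*} (R S : Set (X × Set X)) :
    mantidom (mpar R S) = mantidom R ∪ mantidom S := by
  ext ⟨a, A⟩
  simp only [mantidom, mpar, mem_ofPred_eq, mem_union]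
  constructor
  · rintro ⟨hA, hRS⟩
    by_contra! h
    obtain ⟨B, hB⟩ := h.1 hA
    obtain ⟨C, hC⟩ := h.2 hA
    exact hRS ⟨B ∪ C, B, C, hB, hC, rfl⟩
  · rintro (⟨hA, hR⟩ | ⟨hA, hS⟩)
    · exact ⟨hA, fun ⟨_, B, _, hB, _⟩ => hR ⟨B, hB⟩⟩
    · exact ⟨hA, fun ⟨_, _, C, _, hC, _⟩ => hS ⟨C, hC⟩⟩

theorem mseq_eq_inter_of_subset_sunit {X : Type*} {P Q : Set (X × Set X)}
    (hP : P ⊆ sunit X) (hQ : Q ⊆ sunit X) : mseq P Q = P ∩ Q := by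
  ext ⟨a, A⟩
  constructor
  · rintro ⟨B, hB, f, hf, rfl⟩
    obtain rfl : B = {a} := hP hB
    have hfa : (a, f a) ∈ Q := hf a rfl
    have hfa_eq : f a = {a} := hQ hfa
    simp only [mem_singleton_iff, iUnion_iUnion_eq_left]
    exact ⟨hfa_eq ▸ hB, hfa⟩
  · rintro ⟨hAP, hAQ⟩
    have hA : A = {a} := hP hAP
    refine ⟨A, hAP, fun _ => A, fun b hb => ?_, ?_⟩
    · obtain rfl : b = a := by rwa [hA, mem_singleton_iff] at hb
      exact hAQ
    · simp [hA]

theorem stmt15 {X : Type*} (R S : Set (X × Set X)) :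
    mantidom (R ∪ S) = mseq (mantidom R) (mantidom S) ∧
    mantidom (mpar R S) = mantidom R ∪ mantidom S :=
  ⟨by rw [mantidom_union, mseq_eq_inter_of_subset_sunit (mantidom_subset_sunit R)
      (mantidom_subset_sunit S)], mantidom_mpar R S⟩
end

section
/- In every domain proto-dioid, the least left preservation law holds: x ≤ d(y)·x if and only if d(x) ≤ d(y). -/
/-- A domain proto-dioid: a proto-dioid (idempotent commutative additive monoid with
a possibly non-associative multiplication that is only right-distributive and left
sub-distributive) equipped with a domain operation. The order is `x ≤ y ↔ x + y = y`. -/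
class DomainProtoDioid (α : Type*) where
  add : α → α → α
  mul : α → α → α
  zero : α
  one : α
  d : α → α
  add_assoc : ∀ x y z, add (add x y) z = add x (add y z)
  add_comm : ∀ x y, add x y = add y x
  add_zero : ∀ x, add x zero = x
  add_idem : ∀ x, add x x = x
  one_mul : ∀ x, mul one x = x
  mul_one : ∀ x, mul x one = x
  /-- left sub-distributivity: x·y + x·z ≤ x·(y+z) -/
  mul_subdistrib : ∀ x y z,
    add (add (mul x y) (mul x z)) (mul x (add y z)) = mul x (add y z)
  right_distrib : ∀ x y z, mul (add x y) z = add (mul x z) (mul y z)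
  zero_mul : ∀ x, mul zero x = zero
  /-- domain associativity: associativity when one factor is a domain element -/
  d_assoc : ∀ x y z, (∃ w, x = d w ∨ y = d w ∨ z = d w) →
    mul x (mul y z) = mul (mul x y) z
  /-- left preservation: x ≤ d(x)·x -/
  d_pres : ∀ x, add x (mul (d x) x) = mul (d x) x
  /-- locality -/
  d_loc : ∀ x y, d (mul x y) = d (mul x (d y))
  /-- additivity -/
  d_add : ∀ x y, d (add x y) = add (d x) (d y)
  /-- subidentity: d(x) ≤ 1 -/
  d_sub : ∀ x, add (d x) one = one
  /-- strictness -/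
  d_zero : d zero = zero

namespace DPDAux
variable {α : Type*} [DomainProtoDioid α]

open DomainProtoDioid in
theorem le_trans' {a b c : α} (h1 : add a b = b) (h2 : add b c = c) :
    add a c = c := by
  calc add a c = add a (add b c) := by rw [h2]
    _ = add (add a b) c := (add_assoc a b c).symm
    _ = add b c := by rw [h1]
    _ = c := h2

open DomainProtoDioid in
theorem mul_mono_left {a b c : α} (h : add b c = c) :
    add (mul a b) (mul a c) = mul a c := by
  have h' := mul_subdistrib a b c
  rw [h] at h'
  rwa [DomainProtoDioid.add_assoc, DomainProtoDioid.add_idem] at h'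

open DomainProtoDioid in
theorem d_idem (a : α) : d (d a : α) = d a := by
  have h1 : d (mul (one : α) a) = d (mul (one : α) (d a)) := d_loc one a
  rw [DomainProtoDioid.one_mul, DomainProtoDioid.one_mul] at h1
  exact h1.symm

open DomainProtoDioid in
theorem d_mono {a b : α} (h : add a b = b) : add (d a) (d b) = d b := by
  have h' : d (add a b) = d b := by rw [h]
  rwa [d_add] at h'

open DomainProtoDioid in
theorem main (x y : α) :
    add x (mul (d y) x) = mul (d y) x ↔ add (d x) (d y) = d y := by
  constructor
  · intro h
    have h1 : add (d x) (d (mul (d y) x)) = d (mul (d y) x) := d_mono h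
    have h2 : d (mul (d y) x) = d (mul (d y) (d x)) := d_loc _ _
    have h3 : add (mul (d y) (d x)) (mul (d y) one) = mul (d y) one :=
      mul_mono_left (d_sub x)
    rw [DomainProtoDioid.mul_one] at h3
    have h4 : add (d (mul (d y) (d x))) (d (d y : α)) = d (d y : α) := d_mono h3
    rw [d_idem] at h4
    rw [h2] at h1
    exact le_trans' h1 h4
  · intro h
    have h1 : add (mul (d x) x) (mul (d y) x) = mul (d y) x := by
      have h' := right_distrib (d x) (d y) x
      rw [h] at h'
      exact h'.symm
    exact le_trans' (d_pres x) h1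

end DPDAux

/-- Least left preservation law: x ≤ d(y)·x ↔ d(x) ≤ d(y),
where `x ≤ y` means `x + y = y`. -/

theorem stmt19 {α : Type*} [DomainProtoDioid α] (x y : α) :
    DomainProtoDioid.add x (DomainProtoDioid.mul (DomainProtoDioid.d y) x)
        = DomainProtoDioid.mul (DomainProtoDioid.d y) x ↔
    DomainProtoDioid.add (DomainProtoDioid.d x) (DomainProtoDioid.d y)
        = DomainProtoDioid.d y := DPDAux.main x y
end
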